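/- arXiv:1212.1381 — 3 statements merged into one kernel-verified Lean document; each statement's English description precedes it below -/
import Mathlib

section
/- Let Φ : [0,1] → ℝ be nonnegative, nondecreasing, with Φ(0) = 0, and suppose that for some δ ∈ (0,1) the integral ∫₀¹ v^{−2−δ} Φ(v) dv is finite. Then there exists a constant K₁ > 0 such that Φ(s) ≤ K₁ s^{1+δ} for all s ∈ [0,1]. -/
/-!
Monotonicity gives `Φ s * ∫_s^1 v^(-a-1) dv ≤ ∫_s^1 v^(-a-1) Φ v dv ≤ I`, where `I` is the whole
integral over `(0, 1)`. Since `∫_s^1 v^(-a-1) dv = (s^(-a) - 1) / a`, this reads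
`Φ s * (1 - s^a) ≤ a I s^a`; adding `Φ s * s^a ≤ Φ 1 * s^a` gives `Φ s ≤ (a I + Φ 1) s^a`.
-/

open MeasureTheory Set

theorem integral_Ioo_rpow_neg_sub_one {a s : ℝ} (ha : a ≠ 0) (hs : 0 < s) (hs1 : s ≤ 1) :
    ∫ v in Ioo s 1, v ^ (-a - 1) = (s ^ (-a) - 1) / a := by
  rw [← integral_Ioc_eq_integral_Ioo, ← intervalIntegral.integral_of_le hs1,
    integral_rpow (Or.inr ⟨by contrapose! ha; linarith, notMem_uIcc_of_lt hs one_pos⟩),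
    sub_add_cancel, Real.one_rpow, div_neg, neg_div', neg_sub]

theorem integrableOn_Ioo_rpow_of_pos {r s : ℝ} (hs : 0 < s) :
    IntegrableOn (fun v : ℝ => v ^ r) (Ioo s 1) :=
  (intervalIntegral.intervalIntegrable_rpow (Or.inr (notMem_uIcc_of_lt hs one_pos))).1.mono_set
    Ioo_subset_Ioc_self

theorem MonotoneOn.mul_setIntegral_le {Φ w : ℝ → ℝ} {s b : ℝ} (hΦ : MonotoneOn Φ (Icc s b))
    (hw : ∀ v ∈ Ioo s b, 0 ≤ w v) (hwi : IntegrableOn w (Ioo s b))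
    (hi : IntegrableOn (fun v => w v * Φ v) (Ioo s b)) :
    Φ s * ∫ v in Ioo s b, w v ≤ ∫ v in Ioo s b, w v * Φ v := by
  rw [← integral_const_mul]
  refine setIntegral_mono_on (hwi.const_mul _) hi measurableSet_Ioo fun v hv => ?_
  rw [mul_comm]
  exact mul_le_mul_of_nonneg_left
    (hΦ ⟨le_rfl, (hv.1.trans hv.2).le⟩ ⟨hv.1.le, hv.2.le⟩ hv.1.le) (hw v hv)

section

variable {Φ : ℝ → ℝ} {a s : ℝ}

theorem mul_one_sub_rpow_le_of_integrableOn (ha : 0 < a) (hΦ : ∀ v ∈ Ioo 0 1, 0 ≤ Φ v)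
    (hmono : MonotoneOn Φ (Ioc 0 1))
    (hint : IntegrableOn (fun v => v ^ (-a - 1) * Φ v) (Ioo 0 1)) (hs : 0 < s) (hs1 : s ≤ 1) :
    Φ s * (1 - s ^ a) ≤ a * (∫ v in Ioo 0 1, v ^ (-a - 1) * Φ v) * s ^ a := by
  have hweight : ∀ v ∈ Ioo s 1, 0 ≤ v ^ (-a - 1) := fun v hv =>
    Real.rpow_nonneg (hs.trans hv.1).le _
  have hsub : Ioo s 1 ⊆ Ioo 0 1 := Ioo_subset_Ioo_left hs.le
  have htail : Φ s * ((s ^ (-a) - 1) / a) ≤ ∫ v in Ioo 0 1, v ^ (-a - 1) * Φ v := by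
    rw [← integral_Ioo_rpow_neg_sub_one ha.ne' hs hs1]
    calc Φ s * ∫ v in Ioo s 1, v ^ (-a - 1)
        ≤ ∫ v in Ioo s 1, v ^ (-a - 1) * Φ v :=
          (hmono.mono (Icc_subset_Ioc hs le_rfl)).mul_setIntegral_le hweight
            (integrableOn_Ioo_rpow_of_pos hs) (hint.mono_set hsub)
      _ ≤ ∫ v in Ioo 0 1, v ^ (-a - 1) * Φ v :=
          setIntegral_mono_set hint
            (ae_restrict_of_forall_mem measurableSet_Ioo fun v hv =>
              mul_nonneg (Real.rpow_nonneg hv.1.le _) (hΦ v hv))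
            hsub.eventuallyLE
  have hinv : s ^ (-a) * s ^ a = 1 := by
    rw [Real.rpow_neg hs.le, inv_mul_cancel₀ (Real.rpow_pos_of_pos hs a).ne']
  calc Φ s * (1 - s ^ a) = a * (Φ s * ((s ^ (-a) - 1) / a)) * s ^ a := by
        rw [mul_div_assoc', mul_div_cancel₀ _ ha.ne']
        linear_combination -Φ s * hinv
    _ ≤ _ := by gcongr

theorem le_mul_rpow_of_integrableOn (ha : 0 < a) (hΦ : ∀ v ∈ Ioo 0 1, 0 ≤ Φ v)
    (hmono : MonotoneOn Φ (Ioc 0 1))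
    (hint : IntegrableOn (fun v => v ^ (-a - 1) * Φ v) (Ioo 0 1)) (hs : 0 < s) (hs1 : s ≤ 1) :
    Φ s ≤ (a * (∫ v in Ioo 0 1, v ^ (-a - 1) * Φ v) + Φ 1) * s ^ a := by
  have hleft := mul_one_sub_rpow_le_of_integrableOn ha hΦ hmono hint hs hs1
  have hright : Φ s * s ^ a ≤ Φ 1 * s ^ a :=
    mul_le_mul_of_nonneg_right (hmono ⟨hs, hs1⟩ ⟨one_pos, le_rfl⟩ hs1)
      (Real.rpow_nonneg hs.le a)
  linarith

end

theorem Phi_power_bound (Φ : ℝ → ℝ) (δ : ℝ) (hδ : δ ∈ Set.Ioo (0:ℝ) 1)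
    (hnonneg : ∀ s ∈ Set.Icc (0:ℝ) 1, 0 ≤ Φ s)
    (hmono : MonotoneOn Φ (Set.Icc (0:ℝ) 1)) (h0 : Φ 0 = 0)
    (hint : IntegrableOn (fun v => v ^ (-2 - δ) * Φ v) (Set.Ioo (0:ℝ) 1) volume) :
    ∃ K > 0, ∀ s ∈ Set.Icc (0:ℝ) 1, Φ s ≤ K * s ^ (1 + δ) := by
  have ha : 0 < 1 + δ := by linarith [hδ.1]
  rw [show -2 - δ = -(1 + δ) - 1 by ring] at hint
  set I := ∫ v in Ioo 0 1, v ^ (-(1 + δ) - 1) * Φ v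
  have hI : 0 ≤ I := setIntegral_nonneg measurableSet_Ioo fun v hv =>
    mul_nonneg (Real.rpow_nonneg hv.1.le _) (hnonneg v (Ioo_subset_Icc_self hv))
  have hΦ1 : 0 ≤ Φ 1 := hnonneg 1 (right_mem_Icc.2 zero_le_one)
  refine ⟨(1 + δ) * I + Φ 1 + 1, by positivity, fun s hs => ?_⟩
  rcases hs.1.eq_or_lt with rfl | hs0
  · rw [h0, Real.zero_rpow ha.ne', mul_zero]
  · calc Φ s ≤ ((1 + δ) * I + Φ 1) * s ^ (1 + δ) :=
          le_mul_rpow_of_integrableOn ha (fun v hv => hnonneg v (Ioo_subset_Icc_self hv))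
            (hmono.mono Ioc_subset_Icc_self) hint hs0 hs.2
      _ ≤ _ := by gcongr ?_ * _; linarith
end

section
/- Let X be a nonnegative integer-valued random variable with E[X] < ∞ and let δ ∈ (0,1). Then E[X^{1+δ}] = (δ(1+δ)/Γ(1−δ)) · ∫₀^∞ v^{−2−δ} (E[e^{−vX}] − 1 + v·E[X]) dv, with both sides possibly infinite simultaneously; here the integrand is nonnegative for all v > 0. -/
/-!
Taylor's formula with integral remainder gives `e^{-vx} - 1 + vx = ∫₀^v (v - t) x² e^{-xt} dt`.
Weighting by `v^{-2-δ}` and exchanging the order of integration, the inner integral is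
`∫_t^∞ v^{-2-δ} (v - t) dv = t^{-δ} / (δ(1+δ))`, and the outer one is the Gamma integral
`∫₀^∞ t^{-δ} x² e^{-xt} dt = Γ(1-δ) x^{1+δ}`. Applying this pointwise identity at `x = X ω` and
exchanging once more with the expectation, via `E[e^{-vX}] - 1 + v E[X] = E[e^{-vX} - 1 + vX]`,
gives the claim.
-/

open MeasureTheory ENNReal Set Real

section

variable {μ : Measure ℝ} {f : ℝ → ℝ} {a b : ℝ}

lemma setLIntegral_Ioi_eq_Ioc_add_Ioi (g : ℝ → ℝ≥0∞) (hab : a ≤ b) :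
    ∫⁻ x in Ioi a, g x ∂μ = ∫⁻ x in Ioc a b, g x ∂μ + ∫⁻ x in Ioi b, g x ∂μ := by
  rw [← Ioc_union_Ioi_eq_Ioi hab, lintegral_union measurableSet_Ioi Ioc_disjoint_Ioi_same]

lemma setLIntegral_ofReal_eq_zero_of_nonpos {s : Set ℝ} (hs : MeasurableSet s)
    (hf : ∀ x ∈ s, f x ≤ 0) : ∫⁻ x in s, ENNReal.ofReal (f x) ∂μ = 0 :=
  setLIntegral_eq_zero hs fun x hx => ENNReal.ofReal_of_nonpos (hf x hx)

lemma setLIntegral_Ioi_ofReal_eq_Ioc (hab : a ≤ b) (hf : ∀ x ∈ Ioi b, f x ≤ 0) :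
    ∫⁻ x in Ioi a, ENNReal.ofReal (f x) ∂μ = ∫⁻ x in Ioc a b, ENNReal.ofReal (f x) ∂μ := by
  rw [setLIntegral_Ioi_eq_Ioc_add_Ioi _ hab,
    setLIntegral_ofReal_eq_zero_of_nonpos measurableSet_Ioi hf, add_zero]

lemma setLIntegral_Ioi_ofReal_eq_Ioi (hab : a ≤ b) (hf : ∀ x ∈ Ioc a b, f x ≤ 0) :
    ∫⁻ x in Ioi a, ENNReal.ofReal (f x) ∂μ = ∫⁻ x in Ioi b, ENNReal.ofReal (f x) ∂μ := by
  rw [setLIntegral_Ioi_eq_Ioc_add_Ioi _ hab,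
    setLIntegral_ofReal_eq_zero_of_nonpos measurableSet_Ioc hf, zero_add]

end

lemma exp_neg_mul_sub_one_add_eq_integral (x v : ℝ) :
    exp (-v * x) - 1 + v * x = ∫ t in 0..v, (v - t) * (x ^ 2 * exp (-x * t)) := by
  have hderiv : ∀ t ∈ uIcc 0 v, HasDerivAt (fun t => (1 - x * v + x * t) * exp (-x * t))
      ((v - t) * (x ^ 2 * exp (-x * t))) t := by
    intro t _
    have hlin : HasDerivAt (fun t : ℝ => 1 - x * v + x * t) x t := by
      simpa using ((hasDerivAt_id t).const_mul x).const_add (1 - x * v)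
    have hexp : HasDerivAt (fun t : ℝ => exp (-x * t)) (exp (-x * t) * -x) t := by
      simpa using ((hasDerivAt_id t).const_mul (-x)).exp
    exact (hlin.mul hexp).congr_deriv (by ring)
  rw [intervalIntegral.integral_eq_sub_of_hasDerivAt hderiv
    ((by fun_prop : Continuous _).intervalIntegrable _ _)]
  simp only [mul_zero, add_zero, exp_zero, mul_one]
  ring_nf

lemma lintegral_Ioi_rpow_mul_sub {δ t : ℝ} (hδ : 0 < δ) (ht : 0 < t) :
    ∫⁻ v in Ioi t, ENNReal.ofReal (v ^ (-2 - δ) * (v - t)) =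
      ENNReal.ofReal (t ^ (-δ) / (δ * (1 + δ))) := by
  have hsplit : EqOn (fun v => v ^ (-1 - δ) - t * v ^ (-2 - δ))
      (fun v => v ^ (-2 - δ) * (v - t)) (Ioi t) := by
    intro v hv
    dsimp only
    rw [show -1 - δ = -2 - δ + 1 by ring, rpow_add_one (ht.trans hv).ne']
    ring
  have hi1 : IntegrableOn (fun v : ℝ => v ^ (-1 - δ)) (Ioi t) :=
    integrableOn_Ioi_rpow_of_lt (by linarith) ht
  have hi2 : IntegrableOn (fun v : ℝ => t * v ^ (-2 - δ)) (Ioi t) :=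
    (integrableOn_Ioi_rpow_of_lt (by linarith) ht).const_mul t
  have hval : ∫ v in Ioi t, v ^ (-2 - δ) * (v - t) = t ^ (-δ) / (δ * (1 + δ)) := by
    rw [← setIntegral_congr_fun measurableSet_Ioi hsplit, integral_sub hi1 hi2,
      integral_const_mul, integral_Ioi_rpow_of_lt (by linarith) ht,
      integral_Ioi_rpow_of_lt (by linarith) ht, show -2 - δ + 1 = -δ - 1 by ring,
      rpow_sub_one ht.ne']
    have : -1 - δ + 1 ≠ 0 := by linarith
    have : -δ - 1 ≠ 0 := by linarith
    have : 1 + δ ≠ 0 := by linarith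
    field_simp
    ring_nf
  rw [← hval,
    ofReal_integral_eq_lintegral_ofReal ((hi1.sub hi2).congr_fun hsplit measurableSet_Ioi)]
  filter_upwards [self_mem_ae_restrict measurableSet_Ioi] with v (hv : t < v)
  have : 0 ≤ v - t := by linarith
  have := ht.trans hv
  positivity

lemma lintegral_Ioi_rpow_neg_mul_exp_neg_mul {δ x : ℝ} (hδ : δ < 1) (hx : 0 < x) :
    ∫⁻ t in Ioi 0, ENNReal.ofReal (t ^ (-δ) * exp (-x * t)) =
      ENNReal.ofReal ((1 / x) ^ (1 - δ) * Gamma (1 - δ)) := by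
  have hval : ∫ t in Ioi 0, t ^ (-δ) * exp (-x * t) = (1 / x) ^ (1 - δ) * Gamma (1 - δ) := by
    simpa [sub_sub_cancel_left] using integral_rpow_mul_exp_neg_mul_Ioi (sub_pos.2 hδ) hx
  have hint : IntegrableOn (fun t => t ^ (-δ) * exp (-x * t)) (Ioi 0) :=
    .of_integral_ne_zero (by rw [hval]; have := Gamma_pos_of_pos (sub_pos.2 hδ); positivity)
  rw [← hval, ofReal_integral_eq_lintegral_ofReal hint]
  filter_upwards [self_mem_ae_restrict measurableSet_Ioi] with t (ht : 0 < t)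
  positivity

section

variable {δ x v t : ℝ}

/- `ENNReal.ofReal` clips the integrand to `0` for `t > v`, so the remainder integral over `(0, v]`
can be taken over `(0, ∞)`, where Tonelli's theorem applies. -/
lemma ofReal_rpow_mul_exp_neg_mul_sub_one_add_eq_lintegral (hv : 0 < v) :
    ENNReal.ofReal (v ^ (-2 - δ) * (exp (-v * x) - 1 + v * x)) =
      ∫⁻ t in Ioi 0, ENNReal.ofReal (v ^ (-2 - δ) * ((v - t) * (x ^ 2 * exp (-x * t)))) := by
  have hnonpos : ∀ t ∈ Ioi v, v ^ (-2 - δ) * ((v - t) * (x ^ 2 * exp (-x * t))) ≤ 0 :=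
    fun t (ht : v < t) => mul_nonpos_of_nonneg_of_nonpos (by positivity)
      (mul_nonpos_of_nonpos_of_nonneg (by linarith) (by positivity))
  have hnonneg : ∀ t ∈ Ioc 0 v, 0 ≤ v ^ (-2 - δ) * ((v - t) * (x ^ 2 * exp (-x * t))) :=
    fun t ht => by have : 0 ≤ v - t := sub_nonneg.2 ht.2; positivity
  rw [setLIntegral_Ioi_ofReal_eq_Ioc hv.le hnonpos,
    ← ofReal_integral_eq_lintegral_ofReal
      ((by fun_prop : Continuous _).integrableOn_Ioc)
      ((ae_restrict_iff' measurableSet_Ioc).2 (.of_forall hnonneg)),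
    integral_const_mul, ← intervalIntegral.integral_of_le hv.le,
    exp_neg_mul_sub_one_add_eq_integral]

lemma lintegral_Ioi_rpow_mul_sub_mul_exp (hδ : 0 < δ) (ht : 0 < t) :
    ∫⁻ v in Ioi 0, ENNReal.ofReal (v ^ (-2 - δ) * ((v - t) * (x ^ 2 * exp (-x * t)))) =
      ENNReal.ofReal (x ^ 2 / (δ * (1 + δ)) * (t ^ (-δ) * exp (-x * t))) := by
  have hnonpos : ∀ v ∈ Ioc 0 t, v ^ (-2 - δ) * ((v - t) * (x ^ 2 * exp (-x * t))) ≤ 0 :=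
    fun v hv => mul_nonpos_of_nonneg_of_nonpos (by have := hv.1; positivity)
      (mul_nonpos_of_nonpos_of_nonneg (by linarith [hv.2]) (by positivity))
  have hfactor : ∀ v, ENNReal.ofReal (v ^ (-2 - δ) * ((v - t) * (x ^ 2 * exp (-x * t)))) =
      ENNReal.ofReal (x ^ 2 * exp (-x * t)) * ENNReal.ofReal (v ^ (-2 - δ) * (v - t)) := by
    intro v
    rw [← ENNReal.ofReal_mul (by positivity)]
    congr 1
    ring
  simp_rw [setLIntegral_Ioi_ofReal_eq_Ioi ht.le hnonpos, hfactor]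
  rw [lintegral_const_mul' _ _ ENNReal.ofReal_ne_top, lintegral_Ioi_rpow_mul_sub hδ ht,
    ← ENNReal.ofReal_mul (by positivity)]
  congr 1
  ring

lemma lintegral_Ioi_rpow_mul_exp_neg_mul_sub_one_add (hδ : δ ∈ Ioo 0 1) (hx : 0 ≤ x) :
    ∫⁻ v in Ioi 0, ENNReal.ofReal (v ^ (-2 - δ) * (exp (-v * x) - 1 + v * x)) =
      ENNReal.ofReal (Gamma (1 - δ) / (δ * (1 + δ)) * x ^ (1 + δ)) := by
  obtain ⟨hδ0, hδ1⟩ := hδ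
  rcases hx.eq_or_lt with rfl | hx
  · simp [zero_rpow (by linarith : 1 + δ ≠ 0)]
  have hmeas : Measurable (Function.uncurry fun v t : ℝ =>
      ENNReal.ofReal (v ^ (-2 - δ) * ((v - t) * (x ^ 2 * exp (-x * t))))) :=
    Measurable.ennreal_ofReal (by fun_prop)
  have hsplit : EqOn (fun t => ENNReal.ofReal (x ^ 2 / (δ * (1 + δ)) * (t ^ (-δ) * exp (-x * t))))
      (fun t => ENNReal.ofReal (x ^ 2 / (δ * (1 + δ))) * ENNReal.ofReal (t ^ (-δ) * exp (-x * t)))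
      (Ioi 0) :=
    fun t _ => ENNReal.ofReal_mul (by positivity)
  have hpow : x ^ 2 * (1 / x) ^ (1 - δ) = x ^ (1 + δ) := by
    rw [one_div, inv_rpow hx.le, ← rpow_neg hx.le, ← Real.rpow_natCast, ← rpow_add hx]
    congr 1
    push_cast
    ring
  rw [setLIntegral_congr_fun measurableSet_Ioi
      fun v hv => ofReal_rpow_mul_exp_neg_mul_sub_one_add_eq_lintegral hv,
    lintegral_lintegral_swap hmeas.aemeasurable,
    setLIntegral_congr_fun measurableSet_Ioi fun t ht => lintegral_Ioi_rpow_mul_sub_mul_exp hδ0 ht,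
    setLIntegral_congr_fun measurableSet_Ioi hsplit, lintegral_const_mul' _ _ ENNReal.ofReal_ne_top,
    lintegral_Ioi_rpow_neg_mul_exp_neg_mul hδ1 hx, ← ENNReal.ofReal_mul (by positivity), ← hpow]
  congr 1
  ring

end

section

variable {Ω : Type*} [MeasurableSpace Ω] {μ : Measure Ω} {Y : Ω → ℝ} {v : ℝ}

lemma integrable_exp_neg_mul [IsFiniteMeasure μ] (hY : AEStronglyMeasurable Y μ)
    (hY0 : ∀ ω, 0 ≤ Y ω) (hv : 0 ≤ v) : Integrable (fun ω => exp (-v * Y ω)) μ :=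
  .of_bound (by fun_prop) 1 <| .of_forall fun ω => by
    rw [norm_of_nonneg (exp_nonneg _), exp_le_one_iff, neg_mul, neg_nonpos]
    exact mul_nonneg hv (hY0 ω)

lemma integral_exp_neg_mul_sub_one_add [IsProbabilityMeasure μ] (hY : Integrable Y μ)
    (hY0 : ∀ ω, 0 ≤ Y ω) (hv : 0 ≤ v) :
    (∫ ω, exp (-v * Y ω) ∂μ) - 1 + v * ∫ ω, Y ω ∂μ = ∫ ω, (exp (-v * Y ω) - 1 + v * Y ω) ∂μ := by
  have hexp := integrable_exp_neg_mul hY.aestronglyMeasurable hY0 hv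
  have hexp_sub : Integrable (fun ω => exp (-v * Y ω) - 1) μ := hexp.sub (integrable_const 1)
  rw [integral_add hexp_sub (hY.const_mul v),
    integral_sub hexp (integrable_const 1), integral_const_mul, integral_const, probReal_univ,
    one_smul]

theorem lintegral_ofReal_rpow_one_add_eq [IsProbabilityMeasure μ] (hY : Measurable Y)
    (hY0 : ∀ ω, 0 ≤ Y ω) (hint : Integrable Y μ) {δ : ℝ} (hδ : δ ∈ Ioo 0 1) :
    ∫⁻ ω, ENNReal.ofReal (Y ω ^ (1 + δ)) ∂μ =
      ENNReal.ofReal (δ * (1 + δ) / Gamma (1 - δ)) *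
        ∫⁻ v in Ioi 0, ENNReal.ofReal (v ^ (-2 - δ) *
          ((∫ ω, exp (-v * Y ω) ∂μ) - 1 + v * ∫ ω, Y ω ∂μ)) := by
  have hslice : ∀ v ∈ Ioi (0 : ℝ), ENNReal.ofReal (v ^ (-2 - δ) *
      ((∫ ω, exp (-v * Y ω) ∂μ) - 1 + v * ∫ ω, Y ω ∂μ)) =
        ∫⁻ ω, ENNReal.ofReal (v ^ (-2 - δ) * (exp (-v * Y ω) - 1 + v * Y ω)) ∂μ := by
    intro v (hv : 0 < v)
    rw [integral_exp_neg_mul_sub_one_add hint hY0 hv.le, ← integral_const_mul,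
      ofReal_integral_eq_lintegral_ofReal]
    · exact (((integrable_exp_neg_mul hint.aestronglyMeasurable hY0 hv.le).sub
        (integrable_const 1)).add (hint.const_mul v)).const_mul _
    · refine .of_forall fun ω => mul_nonneg (by positivity) ?_
      linarith [add_one_le_exp (-v * Y ω)]
  have hmeas : Measurable (Function.uncurry fun v ω =>
      ENNReal.ofReal (v ^ (-2 - δ) * (exp (-v * Y ω) - 1 + v * Y ω))) :=
    Measurable.ennreal_ofReal (by fun_prop)
  have hΓ : 0 < Gamma (1 - δ) := Gamma_pos_of_pos (by linarith [hδ.2])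
  have hδ' : 0 < δ * (1 + δ) := by nlinarith [hδ.1]
  rw [setLIntegral_congr_fun measurableSet_Ioi hslice, lintegral_lintegral_swap hmeas.aemeasurable]
  simp_rw [lintegral_Ioi_rpow_mul_exp_neg_mul_sub_one_add hδ (hY0 _),
    ENNReal.ofReal_mul (div_pos hΓ hδ').le]
  rw [lintegral_const_mul' _ _ ENNReal.ofReal_ne_top, ← mul_assoc,
    ← ENNReal.ofReal_mul (by positivity), div_mul_div_cancel₀ hΓ.ne', div_self hδ'.ne',
    ENNReal.ofReal_one, one_mul]

end

theorem fractional_moment_laplace_repr {Ω : Type*} [MeasurableSpace Ω] (μ : Measure Ω)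
    [IsProbabilityMeasure μ] (X : Ω → ℕ) (hX : Measurable X)
    (hint : Integrable (fun ω => (X ω : ℝ)) μ)
    (δ : ℝ) (hδ : δ ∈ Set.Ioo (0:ℝ) 1) :
    (∀ v ∈ Set.Ioi (0:ℝ),
      0 ≤ (∫ ω, Real.exp (-v * (X ω : ℝ)) ∂μ) - 1 + v * ∫ ω, (X ω : ℝ) ∂μ) ∧
    ∫⁻ ω, ((X ω : ℝ≥0∞)) ^ (1 + δ) ∂μ =
      ENNReal.ofReal (δ * (1 + δ) / Real.Gamma (1 - δ)) *
        ∫⁻ v in Set.Ioi (0:ℝ), ENNReal.ofReal (v ^ (-2 - δ) *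
          ((∫ ω, Real.exp (-v * (X ω : ℝ)) ∂μ) - 1 + v * ∫ ω, (X ω : ℝ) ∂μ)) := by
  have hX0 : ∀ ω, 0 ≤ (X ω : ℝ) := fun ω => Nat.cast_nonneg _
  refine ⟨fun v (hv : 0 < v) => ?_, ?_⟩
  · rw [integral_exp_neg_mul_sub_one_add hint hX0 hv.le]
    exact integral_nonneg fun ω => (by linarith [add_one_le_exp (-v * X ω)] : (0 : ℝ) ≤ _)
  · have hcast : ∀ ω, (X ω : ℝ≥0∞) ^ (1 + δ) = ENNReal.ofReal ((X ω : ℝ) ^ (1 + δ)) := fun ω => by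
      rw [← ENNReal.ofReal_rpow_of_nonneg (hX0 ω) (by linarith [hδ.1]), ENNReal.ofReal_natCast]
    rw [lintegral_congr hcast]
    exact lintegral_ofReal_rpow_one_add_eq (by fun_prop) hX0 hint hδ
end

section
/- Let f, g : [0,∞) → [0,∞) be continuous, bounded functions and p, q > 1 constants such that f(t) ~ a·t^{−p} and g(t) ~ b·t^{−q} as t → ∞, with a, b > 0. Then as t → ∞, the convolution satisfies ∫₀^t f(t−u) g(u) du ~ a·(∫₀^∞ g(u) du)·t^{−p} + b·(∫₀^∞ f(u) du)·t^{−q}. In particular, if p < q then ∫₀^t f(t−u)g(u)du ~ a·(∫₀^∞ g)·t^{−p}. -/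
/-!
Split the convolution at `t / 2`:
`∫₀ᵗ f(t-u) g(u) du = ∫₀^{t/2} f(t-u) g(u) du + ∫₀^{t/2} g(t-u) f(u) du`.
On `(0, t/2]` we have `t - u ≥ t/2`, so `f(t-u) / t^(-p)` is bounded uniformly by a multiple of
`2^p` and tends to `a` for each fixed `u`; dominated convergence against `|g|` gives
`∫₀^{t/2} f(t-u) g(u) du ~ a (∫₀^∞ g) t^(-p)`, and symmetrically for the other half.
Both main terms are positive, so the two equivalences add.
-/

open MeasureTheory Filter Asymptotics Topology Set

namespace Asymptotics

variable {α : Type*} {l : Filter α} {u v w z φ : α → ℝ} {c : ℝ}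

theorem isEquivalent_const_mul_iff_tendsto_div (hc : c ≠ 0) (hφ : ∀ᶠ x in l, φ x ≠ 0) :
    (u ~[l] fun x => c * φ x) ↔ Tendsto (fun x => u x / φ x) l (𝓝 c) := by
  have hcancel : (fun x => c * φ x / φ x) =ᶠ[l] fun _ => c :=
    hφ.mono fun x hx => mul_div_cancel_right₀ c hx
  constructor
  · intro h
    exact ((h.div (IsEquivalent.refl (u := φ))).congr_right hcancel).symm.tendsto_nhds
      tendsto_const_nhds
  · intro h
    refine (((isEquivalent_const_iff_tendsto hc).mpr h).mul (IsEquivalent.refl (u := φ))).congr_left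
      (hφ.mono fun x hx => div_mul_cancel₀ (u x) hx)

theorem IsEquivalent.add_add_of_eventually_nonneg (huv : u ~[l] v) (hwz : w ~[l] z)
    (hv : ∀ᶠ x in l, 0 ≤ v x) (hz : ∀ᶠ x in l, 0 ≤ z x) : u + w ~[l] v + z := by
  have hv' : v =ᶠ[l] fun x => |v x| := hv.mono fun x hx => (abs_of_nonneg hx).symm
  have hz' : z =ᶠ[l] fun x => |z x| := hz.mono fun x hx => (abs_of_nonneg hx).symm
  exact ((huv.congr_right hv').add_add_of_nonneg (fun _ => abs_nonneg _) (fun _ => abs_nonneg _)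
    (hwz.congr_right hz')).congr_right (hv'.add hz').symm

end Asymptotics

theorem isLittleO_rpow_rpow_atTop {r s : ℝ} (h : r < s) :
    (fun t : ℝ => t ^ r) =o[atTop] fun t => t ^ s := by
  refine (isLittleO_iff_tendsto' ?_).mpr ?_
  · filter_upwards [eventually_gt_atTop 0] with t ht h0
    exact absurd h0 (Real.rpow_pos_of_pos ht s).ne'
  · refine (tendsto_rpow_neg_atTop (sub_pos.mpr h)).congr' ?_
    filter_upwards [eventually_gt_atTop 0] with t ht
    rw [← Real.rpow_sub ht, neg_sub]

theorem integrableOn_Ioi_of_isBigO_rpow {f : ℝ → ℝ} {p c : ℝ} (hf : Continuous f) (hp : 1 < p)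
    (hO : f =O[atTop] fun t => t ^ (-p)) : IntegrableOn f (Ioi c) :=
  (hf.locallyIntegrable.locallyIntegrableOn _ |>.integrableOn_of_isBigO_atTop hO
    (integrableAtFilter_rpow_atTop_iff.mpr (by linarith))).mono_set Ioi_subset_Ici_self

theorem setIntegral_Ioi_pos_of_eventually_pos {g : ℝ → ℝ} {c : ℝ} (hg0 : ∀ t, c < t → 0 ≤ g t)
    (hgi : IntegrableOn g (Ioi c)) (hpos : ∀ᶠ t in atTop, 0 < g t) : 0 < ∫ t in Ioi c, g t := by
  rw [setIntegral_pos_iff_support_of_nonneg_ae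
    ((ae_restrict_mem measurableSet_Ioi).mono fun t ht => hg0 t ht) hgi]
  obtain ⟨T, hT⟩ := eventually_atTop.mp hpos
  have hsub : Ioi (max T c) ⊆ Function.support g ∩ Ioi c := fun t ht =>
    ⟨(hT t (le_max_left T c |>.trans ht.le)).ne', (le_max_right T c).trans_lt ht⟩
  refine lt_of_lt_of_le ?_ (measure_mono hsub)
  simp

theorem intervalIntegral_comp_sub_mul_eq_add_half {f g : ℝ → ℝ} (hf : Continuous f)
    (hg : Continuous g) (t : ℝ) :
    ∫ u in (0:ℝ)..t, f (t - u) * g u =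
      (∫ u in (0:ℝ)..t / 2, f (t - u) * g u) + ∫ u in (0:ℝ)..t / 2, g (t - u) * f u := by
  have hint : ∀ c d : ℝ, IntervalIntegrable (fun u => f (t - u) * g u) volume c d := fun c d =>
    ((hf.comp (continuous_const.sub continuous_id)).mul hg).intervalIntegrable c d
  rw [← intervalIntegral.integral_add_adjacent_intervals (hint 0 (t / 2)) (hint (t / 2) t)]
  congr 1
  have := intervalIntegral.integral_comp_sub_left (fun x => g (t - x) * f x) (a := t / 2) (b := t) t
  simp only [sub_sub_cancel, sub_self, sub_half] at this
  rw [← this]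
  exact intervalIntegral.integral_congr fun u _ => mul_comm _ _

theorem rpow_neg_sub_div_rpow_neg_le_two_rpow {p t u : ℝ} (hp : 0 ≤ p) (ht : 0 < t)
    (hut : u ≤ t / 2) : (t - u) ^ (-p) / t ^ (-p) ≤ 2 ^ p := by
  rw [div_le_iff₀ (Real.rpow_pos_of_pos ht _)]
  calc (t - u) ^ (-p) ≤ (t / 2) ^ (-p) :=
        Real.rpow_le_rpow_of_nonpos (half_pos ht) (by linarith) (neg_nonpos.mpr hp)
    _ = 2 ^ p * t ^ (-p) := by
        rw [Real.div_rpow ht.le zero_le_two, Real.rpow_neg zero_le_two, div_inv_eq_mul, mul_comm]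

theorem tendsto_comp_sub_div_rpow {f : ℝ → ℝ} {a p : ℝ}
    (hf : Tendsto (fun t => f t / t ^ (-p)) atTop (𝓝 a)) (u : ℝ) :
    Tendsto (fun t => f (t - u) / t ^ (-p)) atTop (𝓝 a) := by
  have hshift : Tendsto (fun t => f (t - u) / (t - u) ^ (-p)) atTop (𝓝 a) :=
    hf.comp (tendsto_atTop_add_const_right _ (-u) tendsto_id)
  have hratio : Tendsto (fun t : ℝ => (t - u) / t) atTop (𝓝 1) := by
    have : Tendsto (fun t : ℝ => 1 - u * t⁻¹) atTop (𝓝 (1 - u * 0)) :=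
      tendsto_const_nhds.sub (tendsto_inv_atTop_zero.const_mul u)
    rw [mul_zero, sub_zero] at this
    refine this.congr' ?_
    filter_upwards [eventually_ne_atTop 0] with t ht
    field_simp
  have hpow : Tendsto (fun t : ℝ => ((t - u) / t) ^ (-p)) atTop (𝓝 1) := by
    simpa using hratio.rpow_const (Or.inl one_ne_zero)
  refine (by simpa using hshift.mul hpow : Tendsto _ atTop (𝓝 a)).congr' ?_
  filter_upwards [eventually_gt_atTop 0, eventually_gt_atTop u] with t ht htu
  have htu' : 0 < t - u := sub_pos.mpr htu
  rw [Real.div_rpow htu'.le ht.le]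
  field_simp [(Real.rpow_pos_of_pos htu' (-p)).ne', (Real.rpow_pos_of_pos ht (-p)).ne']

theorem tendsto_intervalIntegral_half_comp_sub_mul_div_rpow {f g : ℝ → ℝ} {a p : ℝ} (hp : 0 ≤ p)
    (hfm : Measurable f) (hgi : IntegrableOn g (Ioi 0))
    (hf : Tendsto (fun t => f t / t ^ (-p)) atTop (𝓝 a)) :
    Tendsto (fun t => (∫ u in (0:ℝ)..t / 2, f (t - u) * g u) / t ^ (-p)) atTop
      (𝓝 (a * ∫ u in Ioi 0, g u)) := by
  set F : ℝ → ℝ → ℝ := fun t => (Ioc 0 (t / 2)).indicator fun u => f (t - u) / t ^ (-p) * g u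
  obtain ⟨T, hT⟩ := eventually_atTop.mp (hf.norm.eventually_le_const (lt_add_one ‖a‖))
  have hbound : ∀ᶠ t in atTop, ∀ u, ‖F t u‖ ≤ 2 ^ p * (‖a‖ + 1) * ‖g u‖ := by
    filter_upwards [eventually_ge_atTop (2 * T), eventually_gt_atTop 0] with t hTt ht u
    rw [norm_indicator_eq_indicator_norm]
    refine indicator_apply_le' (fun hu => ?_) (fun _ => by positivity)
    have htu : 0 < t - u := by linarith [hu.2]
    calc ‖f (t - u) / t ^ (-p) * g u‖
        = ‖f (t - u) / (t - u) ^ (-p)‖ * ((t - u) ^ (-p) / t ^ (-p)) * ‖g u‖ := by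
          rw [norm_mul, norm_div, norm_div, Real.norm_of_nonneg (Real.rpow_pos_of_pos ht _).le,
            Real.norm_of_nonneg (Real.rpow_pos_of_pos htu _).le]
          field_simp [(Real.rpow_pos_of_pos htu (-p)).ne']
      _ ≤ (‖a‖ + 1) * 2 ^ p * ‖g u‖ := by
          gcongr
          · exact hT _ (by linarith [hu.2])
          · exact rpow_neg_sub_div_rpow_neg_le_two_rpow hp ht hu.2
      _ = 2 ^ p * (‖a‖ + 1) * ‖g u‖ := by ring
  have hlim : ∀ u ∈ Ioi (0:ℝ), Tendsto (fun t => F t u) atTop (𝓝 (a * g u)) := fun u hu =>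
    ((tendsto_comp_sub_div_rpow hf u).mul_const (g u)).congr' <|
      (eventually_ge_atTop (2 * u)).mono fun t ht =>
        (indicator_of_mem (show u ∈ Ioc 0 (t / 2) from ⟨hu, by linarith⟩) _).symm
  have hdom : Tendsto (fun t => ∫ u in Ioi 0, F t u) atTop (𝓝 (∫ u in Ioi 0, a * g u)) := by
    refine tendsto_integral_filter_of_dominated_convergence (fun u => 2 ^ p * (‖a‖ + 1) * ‖g u‖)
      ?_ ?_ (hgi.norm.const_mul _) ?_
    · refine Eventually.of_forall fun t => AEStronglyMeasurable.indicator ?_ measurableSet_Ioc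
      exact ((hfm.comp (measurable_const.sub measurable_id)).div_const _).aestronglyMeasurable.mul
        hgi.aestronglyMeasurable
    · exact hbound.mono fun t ht => Eventually.of_forall (ht ·)
    · exact (ae_restrict_mem measurableSet_Ioi).mono hlim
  rw [integral_const_mul] at hdom
  refine hdom.congr' ((eventually_ge_atTop 0).mono fun t ht => ?_)
  dsimp only [F]
  rw [setIntegral_indicator measurableSet_Ioc, inter_eq_right.mpr Ioc_subset_Ioi_self,
    intervalIntegral.integral_of_le (by linarith), ← integral_div]
  simp only [div_mul_eq_mul_div]

theorem isEquivalent_intervalIntegral_half_comp_sub_mul {f g : ℝ → ℝ} {a p : ℝ} (hp : 0 ≤ p)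
    (hfm : Measurable f) (hgi : IntegrableOn g (Ioi 0)) (ha : a ≠ 0)
    (hG : ∫ u in Ioi 0, g u ≠ 0) (hf : f ~[atTop] fun t => a * t ^ (-p)) :
    (fun t => ∫ u in (0:ℝ)..t / 2, f (t - u) * g u) ~[atTop]
      fun t => a * (∫ u in Ioi 0, g u) * t ^ (-p) := by
  have rpow_ne : ∀ᶠ t : ℝ in atTop, t ^ (-p) ≠ 0 :=
    (eventually_gt_atTop 0).mono fun t ht => (Real.rpow_pos_of_pos ht _).ne'
  exact (isEquivalent_const_mul_iff_tendsto_div (mul_ne_zero ha hG) rpow_ne).mpr <|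
    tendsto_intervalIntegral_half_comp_sub_mul_div_rpow hp hfm hgi
      ((isEquivalent_const_mul_iff_tendsto_div ha rpow_ne).mp hf)

theorem convolution_asymptotics_general (f g : ℝ → ℝ)
    (hfc : Continuous f) (hgc : Continuous g)
    (hf0 : ∀ t, (0:ℝ) ≤ t → 0 ≤ f t) (hg0 : ∀ t, (0:ℝ) ≤ t → 0 ≤ g t)
    (a b p q : ℝ) (ha : 0 < a) (hb : 0 < b) (hp : 1 < p) (hq : 1 < q)
    (hfasym : f ~[atTop] fun t => a * t ^ (-p))
    (hgasym : g ~[atTop] fun t => b * t ^ (-q)) :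
    ((fun t => ∫ u in (0:ℝ)..t, f (t - u) * g u) ~[atTop]
      fun t => a * (∫ u in Set.Ioi (0:ℝ), g u) * t ^ (-p)
        + b * (∫ u in Set.Ioi (0:ℝ), f u) * t ^ (-q)) ∧
    (p < q → (fun t => ∫ u in (0:ℝ)..t, f (t - u) * g u) ~[atTop]
      fun t => a * (∫ u in Set.Ioi (0:ℝ), g u) * t ^ (-p)) := by
  have rpow_pos (r : ℝ) : ∀ᶠ t : ℝ in atTop, 0 < t ^ r :=
    (eventually_gt_atTop 0).mono fun t ht => Real.rpow_pos_of_pos ht r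
  have hfi : IntegrableOn f (Ioi 0) :=
    integrableOn_Ioi_of_isBigO_rpow hfc hp (hfasym.isBigO.trans (isBigO_const_mul_self a _ _))
  have hgi : IntegrableOn g (Ioi 0) :=
    integrableOn_Ioi_of_isBigO_rpow hgc hq (hgasym.isBigO.trans (isBigO_const_mul_self b _ _))
  have hF : 0 < ∫ u in Ioi 0, f u := setIntegral_Ioi_pos_of_eventually_pos
    (fun t ht => hf0 t ht.le) hfi (hfasym.eventually_pos ((rpow_pos _).mono fun _ => mul_pos ha))
  have hG : 0 < ∫ u in Ioi 0, g u := setIntegral_Ioi_pos_of_eventually_pos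
    (fun t ht => hg0 t ht.le) hgi (hgasym.eventually_pos ((rpow_pos _).mono fun _ => mul_pos hb))
  have hA := isEquivalent_intervalIntegral_half_comp_sub_mul (by linarith) hfc.measurable hgi
    ha.ne' hG.ne' hfasym
  have hB := isEquivalent_intervalIntegral_half_comp_sub_mul (by linarith) hgc.measurable hfi
    hb.ne' hF.ne' hgasym
  have hconv := (hA.add_add_of_eventually_nonneg hB
    ((rpow_pos _).mono fun _ ht => (mul_pos (mul_pos ha hG) ht).le)
    ((rpow_pos _).mono fun _ ht => (mul_pos (mul_pos hb hF) ht).le)).congr_left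
    (Eventually.of_forall fun t => (intervalIntegral_comp_sub_mul_eq_add_half hfc hgc t).symm)
  refine ⟨hconv, fun hpq => hconv.trans (IsEquivalent.refl.add_isLittleO ?_)⟩
  exact ((isLittleO_rpow_rpow_atTop (neg_lt_neg hpq)).const_mul_left _).trans_isBigO
    (isBigO_self_const_mul (mul_pos ha hG).ne' _ _)

theorem convolution_asymptotics (f g : ℝ → ℝ)
    (hfc : Continuous f) (hgc : Continuous g)
    (hf0 : ∀ t, (0:ℝ) ≤ t → 0 ≤ f t) (hg0 : ∀ t, (0:ℝ) ≤ t → 0 ≤ g t)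
    (hfb : ∃ M : ℝ, ∀ t, (0:ℝ) ≤ t → f t ≤ M) (hgb : ∃ M : ℝ, ∀ t, (0:ℝ) ≤ t → g t ≤ M)
    (a b p q : ℝ) (ha : 0 < a) (hb : 0 < b) (hp : 1 < p) (hq : 1 < q)
    (hfasym : f ~[atTop] fun t => a * t ^ (-p))
    (hgasym : g ~[atTop] fun t => b * t ^ (-q)) :
    ((fun t => ∫ u in (0:ℝ)..t, f (t - u) * g u) ~[atTop]
      fun t => a * (∫ u in Set.Ioi (0:ℝ), g u) * t ^ (-p)
        + b * (∫ u in Set.Ioi (0:ℝ), f u) * t ^ (-q)) ∧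
    (p < q → (fun t => ∫ u in (0:ℝ)..t, f (t - u) * g u) ~[atTop]
      fun t => a * (∫ u in Set.Ioi (0:ℝ), g u) * t ^ (-p)) :=
  convolution_asymptotics_general f g hfc hgc hf0 hg0 a b p q ha hb hp hq hfasym hgasym
end
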